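/- Let ν* be the Euclidean projection of ν⁰ onto the simplex Δ^{m-1}. If ν*_j = 0 for indices j in a set S of size k (and ν*_j > 0 otherwise), then the restriction of ν* to the complement of S equals the Euclidean projection of the restriction of ν⁰ onto the (m−k)-dimensional simplex {x ∈ ℝ^{m−k} : x_j ≥ 0, ∑ x_j = 1}. -/
import Mathlib


open scoped BigOperators

lemma simplex_split_sum {m : ℕ} (νstar : Fin m → ℝ) (f : Fin m → ℝ) :
    ∑ j, f j = (∑ j : {j : Fin m // νstar j ≠ 0}, f j)
      + ∑ j ∈ Finset.univ.filter (fun j => νstar j = 0), f j := by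
  have h1 : (∑ j : {j : Fin m // νstar j ≠ 0}, f j)
      = ∑ j ∈ Finset.univ.filter (fun j => νstar j ≠ 0), f j :=
    (Finset.sum_subtype _ (by simp) f).symm
  rw [h1, ← Finset.sum_filter_add_sum_filter_not Finset.univ (fun j => νstar j = 0) f]
  ring

theorem simplex_projection_restriction {m : ℕ} (ν₀ νstar : Fin m → ℝ)
    (hmem : νstar ∈ stdSimplex ℝ (Fin m))
    (hproj : ∀ x ∈ stdSimplex ℝ (Fin m),
      (∑ j, (νstar j - ν₀ j) ^ 2) ≤ ∑ j, (x j - ν₀ j) ^ 2)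
    (k : ℕ) (hk : k = (Finset.univ.filter fun j => νstar j = 0).card) (hkm : k < m) :
    -- the restriction of νstar to the complement of S = {j | νstar j = 0}
    -- belongs to the (m-k)-dimensional simplex and is the Euclidean projection
    -- of the restriction of ν₀ onto it
    (∀ j : {j : Fin m // νstar j ≠ 0}, 0 ≤ νstar j) ∧
    (∑ j : {j : Fin m // νstar j ≠ 0}, νstar j = 1) ∧
    (∀ x : {j : Fin m // νstar j ≠ 0} → ℝ, (∀ j, 0 ≤ x j) → (∑ j, x j = 1) →
      (∑ j : {j : Fin m // νstar j ≠ 0}, (νstar j - ν₀ j) ^ 2)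
        ≤ ∑ j : {j : Fin m // νstar j ≠ 0}, (x j - ν₀ j) ^ 2) := by
  obtain ⟨hnn, hsum⟩ := hmem
  refine ⟨fun j => hnn j, ?_, ?_⟩
  · have := simplex_split_sum νstar νstar
    rw [hsum] at this
    have hz : ∑ j ∈ Finset.univ.filter (fun j => νstar j = 0), νstar j = 0 :=
      Finset.sum_eq_zero (fun j hj => by simpa using (Finset.mem_filter.mp hj).2)
    linarith
  · intro x hx hx1
    set y : Fin m → ℝ := fun j => if h : νstar j = 0 then 0 else x ⟨j, h⟩ with hy
    have hyval : ∀ j : {j : Fin m // νstar j ≠ 0}, y j.1 = x j := by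
      intro j; simp [hy, j.2]
    have hymem : y ∈ stdSimplex ℝ (Fin m) := by
      constructor
      · intro j
        by_cases h : νstar j = 0
        · simp [hy, h]
        · simpa [hy, h] using hx ⟨j, h⟩
      · have := simplex_split_sum νstar y
        have hz : ∑ j ∈ Finset.univ.filter (fun j => νstar j = 0), y j = 0 :=
          Finset.sum_eq_zero (fun j hj => by
            simp [hy, (Finset.mem_filter.mp hj).2])
        have hxy : (∑ j : {j : Fin m // νstar j ≠ 0}, y j.1) = 1 := by
          rw [← hx1]; exact Finset.sum_congr rfl (fun j _ => hyval j)
        rw [this, hxy, hz]; ring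
    have key := hproj y hymem
    have hsplit1 := simplex_split_sum νstar (fun j => (νstar j - ν₀ j) ^ 2)
    have hsplit2 := simplex_split_sum νstar (fun j => (y j - ν₀ j) ^ 2)
    have heq : ∑ j ∈ Finset.univ.filter (fun j => νstar j = 0), (νstar j - ν₀ j) ^ 2
        = ∑ j ∈ Finset.univ.filter (fun j => νstar j = 0), (y j - ν₀ j) ^ 2 :=
      Finset.sum_congr rfl (fun j hj => by
        simp [hy, (Finset.mem_filter.mp hj).2])
    have hxy2 : (∑ j : {j : Fin m // νstar j ≠ 0}, (y j.1 - ν₀ j.1) ^ 2)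
        = ∑ j : {j : Fin m // νstar j ≠ 0}, (x j - ν₀ j.1) ^ 2 :=
      Finset.sum_congr rfl (fun j _ => by rw [hyval j])
    rw [hsplit1, hsplit2, hxy2] at key
    linarith
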